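/- arXiv:1510.01497 — 4 statements merged into one kernel-verified Lean document; each statement's English description precedes it below -/
import Mathlib

section
/- Let A be a real 2n×2n matrix whose eigenvalues all have negative real part except for a simple eigenvalue 0 with right eigenvector v₀, and let C be a matrix with C v₀ = 0. Then the matrix P̂ = ∫₀^∞ e^{Aᵀt} Cᵀ C e^{At} dt satisfies the Lyapunov equation P̂A + Aᵀ P̂ + CᵀC = 0 together with P̂ v₀ = 0. -/
open Matrix MeasureTheory NormedSpace

open Set

/-
With `E t = exp (t • Aᵀ) * (Cᵀ * C) * exp (t • A)` we have `E' = Aᵀ * E + E * A`. Since `E` and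
`E'` are integrable on `(0, ∞)`, `E t → 0` as `t → ∞`, so integrating `E'` gives
`Aᵀ * P̂ + P̂ * A = -E 0 = -Cᵀ * C`. For the kernel, `A v₀ = 0` makes `exp (t • A)` fix `v₀`, hence
`E t v₀ = exp (t • Aᵀ) Cᵀ (C v₀) = 0` for every `t`, and `P̂ v₀ = 0`.
-/

section BanachAlgebra

variable {𝕂 𝔸 : Type*} [RCLike 𝕂] [NormedRing 𝔸] [NormedAlgebra 𝕂 𝔸] [CompleteSpace 𝔸]

theorem hasDerivAt_exp_smul_mul_mul_exp_smul (X Q Y : 𝔸) (t : 𝕂) :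
    HasDerivAt (fun u : 𝕂 => exp (u • X) * Q * exp (u • Y))
      (X * (exp (t • X) * Q * exp (t • Y)) + exp (t • X) * Q * exp (t • Y) * Y) t := by
  refine (((hasDerivAt_exp_smul_const' X t).mul_const Q).mul
    (hasDerivAt_exp_smul_const Y t)).congr_deriv ?_
  simp only [mul_assoc]

theorem exp_smul_mul_eq_self_of_mul_eq_zero {X V : 𝔸} (h : X * V = 0) (t : 𝕂) :
    exp (t • X) * V = V := by
  have hderiv (u : 𝕂) : HasDerivAt (fun u : 𝕂 => exp (u • X) * V) 0 u := by
    simpa [mul_assoc, h] using (hasDerivAt_exp_smul_const X u).mul_const V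
  simpa using is_const_of_deriv_eq_zero (fun u => (hderiv u).differentiableAt)
    (fun u => (hderiv u).deriv) t 0

end BanachAlgebra

theorem integral_Ioi_of_hasDerivAt_of_integrableOn {E : Type*} [NormedAddCommGroup E]
    [NormedSpace ℝ E] [CompleteSpace E] {f f' : ℝ → E} {a : ℝ}
    (hderiv : ∀ x ∈ Ici a, HasDerivAt f (f' x) x) (hf' : IntegrableOn f' (Ioi a))
    (hf : IntegrableOn f (Ioi a)) :
    ∫ x in Ioi a, f' x = -f a := by
  have hlim := tendsto_zero_of_hasDerivAt_of_integrableOn_Ioi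
    (fun x hx => hderiv x (Ioi_subset_Ici_self hx)) hf' hf
  rw [integral_Ioi_of_hasDerivAt_of_tendsto' hderiv hf' hlim, zero_sub]

namespace Matrix

section Exp

variable {𝕂 ι : Type*} [RCLike 𝕂] [Fintype ι] [DecidableEq ι]

/- Matrices carry no global norm; the `L∞` operator norm makes `Matrix ι ι 𝕂` a Banach algebra
whose topology is the entrywise one, so the Banach-algebra lemmas transfer. -/
theorem hasDerivAt_exp_smul_mul_mul_exp_smul (X Q Y : Matrix ι ι 𝕂) (t : 𝕂) :
    HasDerivAt (fun u : 𝕂 => exp (u • X) * Q * exp (u • Y))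
      (X * (exp (t • X) * Q * exp (t • Y)) + exp (t • X) * Q * exp (t • Y) * Y) t := by
  let : NormedRing (Matrix ι ι 𝕂) := Matrix.linftyOpNormedRing
  let : NormedAlgebra 𝕂 (Matrix ι ι 𝕂) := Matrix.linftyOpNormedAlgebra
  have : @CompleteSpace (Matrix ι ι 𝕂) PseudoMetricSpace.toUniformSpace :=
    FiniteDimensional.complete 𝕂 _
  exact _root_.hasDerivAt_exp_smul_mul_mul_exp_smul X Q Y t

theorem exp_smul_mul_eq_self_of_mul_eq_zero {X V : Matrix ι ι 𝕂} (h : X * V = 0) (t : 𝕂) :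
    exp (t • X) * V = V := by
  let : NormedRing (Matrix ι ι 𝕂) := Matrix.linftyOpNormedRing
  let : NormedAlgebra 𝕂 (Matrix ι ι 𝕂) := Matrix.linftyOpNormedAlgebra
  have : @CompleteSpace (Matrix ι ι 𝕂) PseudoMetricSpace.toUniformSpace :=
    FiniteDimensional.complete 𝕂 _
  exact _root_.exp_smul_mul_eq_self_of_mul_eq_zero (𝔸 := Matrix ι ι 𝕂) h t

end Exp

theorem mulVec_eq_zero_iff_mul_replicateCol_eq_zero {ι α : Type*} [Fintype ι]
    [NonUnitalNonAssocSemiring α] {M : Matrix ι ι α} {v : ι → α} :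
    M *ᵥ v = 0 ↔ M * replicateCol ι v = 0 := by
  rw [← replicateCol_mulVec]
  refine ⟨fun h => by rw [h, replicateCol_zero], fun h => funext fun i => ?_⟩
  exact congrFun (congrFun h i) i

section EntrywiseIntegral

variable {X 𝕂 l m n : Type*} [MeasurableSpace X] {μ : Measure X} [RCLike 𝕂] [Fintype m]

/- Matrices carry no global norm, so integrals of matrix-valued functions are taken entry by
entry, as in the definition of `P̂`. -/
noncomputable def entrywiseIntegral (F : X → Matrix l n 𝕂) (μ : Measure X) : Matrix l n 𝕂 :=
  of fun i j => ∫ x, F x i j ∂μ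

theorem integrable_mul_const_apply {F : X → Matrix l m 𝕂}
    (hF : ∀ i j, Integrable (fun x => F x i j) μ) (B : Matrix m n 𝕂) (i : l) (j : n) :
    Integrable (fun x => (F x * B) i j) μ := by
  simp only [mul_apply]
  exact integrable_finsetSum _ fun k _ => (hF i k).mul_const _

theorem integrable_const_mul_apply {F : X → Matrix m n 𝕂}
    (hF : ∀ i j, Integrable (fun x => F x i j) μ) (B : Matrix l m 𝕂) (i : l) (j : n) :
    Integrable (fun x => (B * F x) i j) μ := by
  simp only [mul_apply]
  exact integrable_finsetSum _ fun k _ => (hF k j).const_mul _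

theorem entrywiseIntegral_mul_const {F : X → Matrix l m 𝕂}
    (hF : ∀ i j, Integrable (fun x => F x i j) μ) (B : Matrix m n 𝕂) :
    entrywiseIntegral (fun x => F x * B) μ = entrywiseIntegral F μ * B := by
  ext i j
  simp only [entrywiseIntegral, of_apply, mul_apply, ← integral_mul_const]
  exact integral_finsetSum _ fun k _ => (hF i k).mul_const _

theorem entrywiseIntegral_const_mul {F : X → Matrix m n 𝕂}
    (hF : ∀ i j, Integrable (fun x => F x i j) μ) (B : Matrix l m 𝕂) :
    entrywiseIntegral (fun x => B * F x) μ = B * entrywiseIntegral F μ := by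
  ext i j
  simp only [entrywiseIntegral, of_apply, mul_apply, ← integral_const_mul]
  exact integral_finsetSum _ fun k _ => (hF k j).const_mul _

theorem entrywiseIntegral_add {F G : X → Matrix l n 𝕂}
    (hF : ∀ i j, Integrable (fun x => F x i j) μ)
    (hG : ∀ i j, Integrable (fun x => G x i j) μ) :
    entrywiseIntegral (fun x => F x + G x) μ =
      entrywiseIntegral F μ + entrywiseIntegral G μ := by
  ext i j
  exact integral_add (hF i j) (hG i j)

theorem entrywiseIntegral_zero : entrywiseIntegral (fun _ => (0 : Matrix l n 𝕂)) μ = 0 := by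
  ext i j
  simp [entrywiseIntegral]

theorem entrywiseIntegral_Ioi_of_hasDerivAt [Fintype l] [Fintype n] {F F' : ℝ → Matrix l n 𝕂}
    {a : ℝ} (hderiv : ∀ t ∈ Ici a, HasDerivAt F (F' t) t)
    (hF' : ∀ i j, IntegrableOn (fun t => F' t i j) (Ioi a))
    (hF : ∀ i j, IntegrableOn (fun t => F t i j) (Ioi a)) :
    entrywiseIntegral F' (volume.restrict (Ioi a)) = -F a := by
  ext i j
  refine integral_Ioi_of_hasDerivAt_of_integrableOn (fun t ht => ?_) (hF' i j) (hF i j)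
  let : NormedAddCommGroup (Matrix l n 𝕂) := Matrix.normedAddCommGroup
  let : NormedSpace ℝ (Matrix l n 𝕂) := Matrix.normedSpace
  exact (entryLinearMap ℝ 𝕂 i j).toContinuousLinearMap.hasFDerivAt.comp_hasDerivAt t
    (hderiv t ht)

end EntrywiseIntegral

end Matrix

theorem gramian_solves_lyapunov_general
    (n p : ℕ) (A : Matrix (Fin (2 * n)) (Fin (2 * n)) ℝ)
    (C : Matrix (Fin p) (Fin (2 * n)) ℝ) (v₀ : Fin (2 * n) → ℝ)
    (hAv₀ : A.mulVec v₀ = 0) (hCv₀ : C.mulVec v₀ = 0)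
    -- the improper integral converges (entrywise)
    (hint : ∀ i j, IntegrableOn
      (fun t : ℝ => ((NormedSpace.exp (t • Aᵀ)) * (Cᵀ * C) * NormedSpace.exp (t • A)) i j) (Set.Ioi 0))
    (Phat : Matrix (Fin (2 * n)) (Fin (2 * n)) ℝ)
    (hPhat : Phat = Matrix.of fun i j =>
      ∫ t in Set.Ioi (0 : ℝ), ((NormedSpace.exp (t • Aᵀ)) * (Cᵀ * C) * NormedSpace.exp (t • A)) i j) :
    Phat * A + Aᵀ * Phat + Cᵀ * C = 0 ∧ Phat.mulVec v₀ = 0 := by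
  set E : ℝ → Matrix (Fin (2 * n)) (Fin (2 * n)) ℝ :=
    fun t => exp (t • Aᵀ) * (Cᵀ * C) * exp (t • A)
  have hP : Phat = entrywiseIntegral E (volume.restrict (Ioi 0)) := hPhat
  have hAE := integrable_const_mul_apply hint Aᵀ
  have hEA := integrable_mul_const_apply hint A
  constructor
  · have hFTC := entrywiseIntegral_Ioi_of_hasDerivAt
      (fun t _ => Matrix.hasDerivAt_exp_smul_mul_mul_exp_smul Aᵀ (Cᵀ * C) A t)
      (fun i j => (hAE i j).add (hEA i j)) hint
    rw [entrywiseIntegral_add hAE hEA, entrywiseIntegral_const_mul hint,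
      entrywiseIntegral_mul_const hint] at hFTC
    simp only [zero_smul, exp_zero, one_mul, mul_one] at hFTC
    rw [hP, add_comm (_ * A), hFTC, neg_add_cancel]
  · set V := replicateCol (Fin (2 * n)) v₀
    have hAV : A * V = 0 := mulVec_eq_zero_iff_mul_replicateCol_eq_zero.1 hAv₀
    have hCV : C * V = 0 := by rw [← replicateCol_mulVec, hCv₀, replicateCol_zero]
    have hEV : (fun t => E t * V) = fun _ => 0 := by
      funext t
      simp only [E, Matrix.mul_assoc, Matrix.exp_smul_mul_eq_self_of_mul_eq_zero hAV, hCV,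
        Matrix.mul_zero]
    rw [mulVec_eq_zero_iff_mul_replicateCol_eq_zero, hP, ← entrywiseIntegral_mul_const hint, hEV,
      entrywiseIntegral_zero]

/-- the integral Gramian `Phat = ∫₀^∞ e^{Aᵀt} Cᵀ C e^{At} dt` satisfies the
Lyapunov equation `Phat A + Aᵀ Phat + Cᵀ C = 0` together with `Phat v₀ = 0`. -/
theorem gramian_solves_lyapunov
    (n p : ℕ) (A : Matrix (Fin (2 * n)) (Fin (2 * n)) ℝ)
    (C : Matrix (Fin p) (Fin (2 * n)) ℝ) (v₀ : Fin (2 * n) → ℝ)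
    (hv₀ : v₀ ≠ 0) (hAv₀ : A.mulVec v₀ = 0) (hCv₀ : C.mulVec v₀ = 0)
    -- all eigenvalues other than 0 have strictly negative real part
    (hspec : ∀ μ ∈ spectrum ℂ (A.map (algebraMap ℝ ℂ)), μ ≠ 0 → μ.re < 0)
    -- the eigenvalue 0 is simple
    (hsimple : A.rank = 2 * n - 1)
    -- the improper integral converges (entrywise)
    (hint : ∀ i j, IntegrableOn
      (fun t : ℝ => ((NormedSpace.exp (t • Aᵀ)) * (Cᵀ * C) * NormedSpace.exp (t • A)) i j) (Set.Ioi 0))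
    (Phat : Matrix (Fin (2 * n)) (Fin (2 * n)) ℝ)
    (hPhat : Phat = Matrix.of fun i j =>
      ∫ t in Set.Ioi (0 : ℝ), ((NormedSpace.exp (t • Aᵀ)) * (Cᵀ * C) * NormedSpace.exp (t • A)) i j) :
    Phat * A + Aᵀ * Phat + Cᵀ * C = 0 ∧ Phat.mulVec v₀ = 0 :=
  gramian_solves_lyapunov_general n p A C v₀ hAv₀ hCv₀ hint Phat hPhat
end

section
/- Let P = [[X₁, X₀],[X₀ᵀ, X₂]] be a symmetric block matrix satisfying PA + AᵀP + blkdiag(N, S) = 0 with A = [[0, I],[−M⁻¹L, −M⁻¹D]] and P v₀ = 0 where v₀ = [𝟙ᵀ, 0ᵀ]ᵀ. Then 2·Trace(M⁻¹X₀) = Trace(N L†), where L† is the Moore–Penrose pseudoinverse of L. -/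
open Matrix

/-- for the constrained observability Gramian `P = [[X₁, X₀],[X₀ᵀ, X₂]]`
of the power system, `2·Trace(M⁻¹X₀) = Trace(N L†)`. -/
theorem trace_identity_offdiagonal_block
    (n : ℕ) (m d : Fin n → ℝ) (hm : ∀ i, 0 < m i) (hd : ∀ i, 0 < d i)
    (M D : Matrix (Fin n) (Fin n) ℝ) (hM : M = diagonal m) (hD : D = diagonal d)
    (L Ldag N S : Matrix (Fin n) (Fin n) ℝ)
    (hLsym : L.IsSymm) (hLpsd : L.PosSemidef) (hL1 : L.mulVec (fun _ => 1) = 0)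
    -- `Ldag` is the Moore–Penrose pseudoinverse of the connected-graph Laplacian `L`:
    (hLdag₁ : L * Ldag = 1 - (n : ℝ)⁻¹ • Matrix.of (fun _ _ => (1 : ℝ)))
    (hLdag₂ : Ldag * L = 1 - (n : ℝ)⁻¹ • Matrix.of (fun _ _ => (1 : ℝ)))
    (hLdagsym : Ldag.IsSymm)
    (hNsym : N.IsSymm) (hNpsd : N.PosSemidef) (hN1 : N.mulVec (fun _ => 1) = 0)
    (s : Fin n → ℝ) (hS : S = diagonal s)
    (A : Matrix (Fin n ⊕ Fin n) (Fin n ⊕ Fin n) ℝ)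
    (hA : A = fromBlocks 0 1 (-(M⁻¹ * L)) (-(M⁻¹ * D)))
    (X₁ X₀ X₂ : Matrix (Fin n) (Fin n) ℝ)
    (P : Matrix (Fin n ⊕ Fin n) (Fin n ⊕ Fin n) ℝ)
    (hP : P = fromBlocks X₁ X₀ X₀ᵀ X₂) (hPsym : Pᵀ = P)
    (hLyap : P * A + Aᵀ * P + fromBlocks N 0 0 S = 0)
    (hPv₀ : P.mulVec (Sum.elim (fun _ => 1) 0) = 0) :
    2 * (M⁻¹ * X₀).trace = (N * Ldag).trace := by
  subst hM hD hS hA hP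
  -- inverse of diagonal
  have hMi : (diagonal m)⁻¹ = diagonal (fun i => (m i)⁻¹) := by
    apply Matrix.inv_eq_right_inv
    rw [Matrix.diagonal_mul_diagonal]
    convert Matrix.diagonal_one using 2
    funext i
    exact mul_inv_cancel₀ (hm i).ne'
  set Mi : Matrix (Fin n) (Fin n) ℝ := diagonal (fun i => (m i)⁻¹) with hMidef
  set c : ℝ := (n : ℝ)⁻¹ with hc
  set J : Matrix (Fin n) (Fin n) ℝ := Matrix.of (fun _ _ => (1 : ℝ)) with hJ
  -- column sums of X₀ vanish
  have hcol : ∀ j, ∑ i, X₀ i j = 0 := by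
    intro j
    have h := congrFun hPv₀ (Sum.inr j)
    simp [Matrix.fromBlocks_mulVec, Matrix.mulVec, dotProduct] at h
    exact h
  -- block (1,1) of the Lyapunov equation
  have h := congrArg Matrix.toBlocks₁₁ hLyap
  simp only [Matrix.fromBlocks_transpose, Matrix.fromBlocks_multiply,
    Matrix.fromBlocks_add, Matrix.toBlocks_fromBlocks₁₁, Matrix.transpose_zero,
    Matrix.transpose_one, Matrix.mul_zero, Matrix.zero_mul, Matrix.mul_one,
    Matrix.one_mul, zero_add, add_zero, Matrix.mul_neg,
    Matrix.neg_mul, Matrix.transpose_neg] at h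
  have h0 : (0 : Matrix (Fin n ⊕ Fin n) (Fin n ⊕ Fin n) ℝ).toBlocks₁₁ = 0 := rfl
  rw [h0] at h
  have hN : N = X₀ * ((diagonal m)⁻¹ * L) + ((diagonal m)⁻¹ * L)ᵀ * X₀ᵀ := by
    have h2 : N - (X₀ * ((diagonal m)⁻¹ * L) + ((diagonal m)⁻¹ * L)ᵀ * X₀ᵀ) = 0 := by
      rw [← h]; abel
    exact sub_eq_zero.mp h2
  -- two auxiliary vanishing traces
  have ha : (X₀ * Mi * J).trace = 0 := by
    simp only [Matrix.trace, Matrix.diag, Matrix.mul_apply, hMidef,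
      Matrix.mul_diagonal, hJ, Matrix.of_apply, mul_one]
    simp only [Matrix.diagonal_apply, mul_ite, mul_zero, Finset.sum_ite_eq,
      Finset.sum_ite_eq', Finset.mem_univ, if_true]
    rw [Finset.sum_comm]
    simp [← Finset.sum_mul, hcol]
  have hb : (J * (Mi * X₀ᵀ)).trace = 0 := by
    simp only [Matrix.trace, Matrix.diag, Matrix.mul_apply, hMidef,
      Matrix.diagonal_mul, hJ, Matrix.of_apply, one_mul, Matrix.transpose_apply]
    simp only [Matrix.diagonal_apply, ite_mul, zero_mul, Finset.sum_ite_eq,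
      Finset.sum_ite_eq', Finset.mem_univ, if_true]
    rw [Finset.sum_comm]
    simp [← Finset.mul_sum, hcol]
  have hMiT : Miᵀ = Mi := Matrix.diagonal_transpose _
  -- first trace term
  have ht1 : (X₀ * ((diagonal m)⁻¹ * L) * Ldag).trace = (Mi * X₀).trace := by
    rw [hMi]
    calc (X₀ * (Mi * L) * Ldag).trace
        = (X₀ * Mi * (L * Ldag)).trace := by rw [← Matrix.mul_assoc, Matrix.mul_assoc]
      _ = (X₀ * Mi * (1 - c • J)).trace := by rw [hLdag₁]
      _ = (X₀ * Mi).trace - c * (X₀ * Mi * J).trace := by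
          rw [Matrix.mul_sub, Matrix.mul_one, Matrix.mul_smul, trace_sub, trace_smul]
          rfl
      _ = (Mi * X₀).trace := by rw [ha, Matrix.trace_mul_comm]; ring
  -- second trace term
  have ht2 : (((diagonal m)⁻¹ * L)ᵀ * X₀ᵀ * Ldag).trace = (Mi * X₀).trace := by
    rw [hMi, Matrix.transpose_mul, hMiT, hLsym.eq]
    calc (L * Mi * X₀ᵀ * Ldag).trace
        = (Ldag * (L * Mi * X₀ᵀ)).trace := by rw [Matrix.trace_mul_comm]
      _ = (Ldag * L * (Mi * X₀ᵀ)).trace := by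
          rw [← Matrix.mul_assoc, ← Matrix.mul_assoc, Matrix.mul_assoc (Ldag * L)]
      _ = ((1 - c • J) * (Mi * X₀ᵀ)).trace := by rw [hLdag₂]
      _ = (Mi * X₀ᵀ).trace - c * (J * (Mi * X₀ᵀ)).trace := by
          rw [Matrix.sub_mul, Matrix.one_mul, Matrix.smul_mul, trace_sub, trace_smul]
          rfl
      _ = (Mi * X₀ᵀ).trace := by rw [hb]; ring
      _ = (Mi * X₀).trace := by
          rw [← Matrix.trace_transpose (Mi * X₀ᵀ), Matrix.transpose_mul,
            Matrix.transpose_transpose, hMiT, Matrix.trace_mul_comm]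
  rw [hN, Matrix.add_mul, trace_add, ht1, ht2, hMi]
  ring
end

section
/- Under the same hypotheses as the previous statement, the (2,2) block equation of the Lyapunov equation implies X₀ᵀ + X₀ = X₂M⁻¹D + DM⁻¹X₂ − S, and consequently Trace(D M⁻² X₂) = (1/2)·Trace(M⁻¹S + N L†). -/
open Matrix

/-- the (2,2) block of the Lyapunov equation gives
`X₀ᵀ + X₀ = X₂M⁻¹D + DM⁻¹X₂ − S` and hence
`Trace(D M⁻² X₂) = (1/2)·Trace(M⁻¹S + N L†)`. -/
theorem trace_identity_diagonal_block
    (n : ℕ) (m d : Fin n → ℝ) (hm : ∀ i, 0 < m i) (hd : ∀ i, 0 < d i)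
    (M D : Matrix (Fin n) (Fin n) ℝ) (hM : M = diagonal m) (hD : D = diagonal d)
    (L Ldag N S : Matrix (Fin n) (Fin n) ℝ)
    (hLsym : L.IsSymm) (hLpsd : L.PosSemidef) (hL1 : L.mulVec (fun _ => 1) = 0)
    -- `Ldag` is the Moore–Penrose pseudoinverse of the connected-graph Laplacian `L`:
    (hLdag₁ : L * Ldag = 1 - (n : ℝ)⁻¹ • Matrix.of (fun _ _ => (1 : ℝ)))
    (hLdag₂ : Ldag * L = 1 - (n : ℝ)⁻¹ • Matrix.of (fun _ _ => (1 : ℝ)))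
    (hLdagsym : Ldag.IsSymm)
    (hNsym : N.IsSymm) (hNpsd : N.PosSemidef) (hN1 : N.mulVec (fun _ => 1) = 0)
    (s : Fin n → ℝ) (hS : S = diagonal s)
    (A : Matrix (Fin n ⊕ Fin n) (Fin n ⊕ Fin n) ℝ)
    (hA : A = fromBlocks 0 1 (-(M⁻¹ * L)) (-(M⁻¹ * D)))
    (X₁ X₀ X₂ : Matrix (Fin n) (Fin n) ℝ)
    (P : Matrix (Fin n ⊕ Fin n) (Fin n ⊕ Fin n) ℝ)
    (hP : P = fromBlocks X₁ X₀ X₀ᵀ X₂) (hPsym : Pᵀ = P)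
    (hLyap : P * A + Aᵀ * P + fromBlocks N 0 0 S = 0)
    (hPv₀ : P.mulVec (Sum.elim (fun _ => 1) 0) = 0)
    -- the identity from the previous result
    (hprev : 2 * (M⁻¹ * X₀).trace = (N * Ldag).trace) :
    X₀ᵀ + X₀ = X₂ * M⁻¹ * D + D * M⁻¹ * X₂ - S ∧
      (D * M⁻¹ * M⁻¹ * X₂).trace = (1 / 2) * (M⁻¹ * S + N * Ldag).trace := by
  -- M⁻¹ is the diagonal of inverses
  have hMinv : M⁻¹ = diagonal (fun i => (m i)⁻¹) := by
    apply Matrix.inv_eq_right_inv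
    rw [hM, diagonal_mul_diagonal]
    convert diagonal_one using 2
    exact funext fun i => mul_inv_cancel₀ (hm i).ne'
  have hMinvSym : (M⁻¹)ᵀ = M⁻¹ := by rw [hMinv, diagonal_transpose]
  have hDsym : Dᵀ = D := by rw [hD, diagonal_transpose]
  have hcomm : M⁻¹ * D = D * M⁻¹ := by
    rw [hMinv, hD, diagonal_mul_diagonal, diagonal_mul_diagonal]
    exact congrArg diagonal (funext fun i => mul_comm _ _)
  have hMDT : (-(M⁻¹ * D))ᵀ = -(D * M⁻¹) := by
    rw [transpose_neg, transpose_mul, hMinvSym, hDsym]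
  -- extract the (2,2) block of the Lyapunov equation
  have key := congrArg Matrix.toBlocks₂₂ hLyap
  rw [hA, hP] at key
  simp only [fromBlocks_multiply, fromBlocks_transpose, fromBlocks_add,
    Matrix.toBlocks_fromBlocks₂₂] at key
  have h0 : (Matrix.toBlocks₂₂ (0 : Matrix (Fin n ⊕ Fin n) (Fin n ⊕ Fin n) ℝ)) = 0 := rfl
  rw [h0, hMDT, Matrix.mul_one, transpose_one, Matrix.one_mul] at key
  simp only [Matrix.mul_neg, Matrix.neg_mul] at key
  -- key : X₀ᵀ + -(X₂ * (M⁻¹ * D)) + (X₀ + -(D * M⁻¹ * X₂)) + S = 0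
  have heq : X₀ᵀ + X₀ = X₂ * M⁻¹ * D + D * M⁻¹ * X₂ - S := by
    rw [← sub_eq_zero, mul_assoc X₂ M⁻¹ D]
    calc X₀ᵀ + X₀ - (X₂ * (M⁻¹ * D) + D * M⁻¹ * X₂ - S)
        = X₀ᵀ + -(X₂ * (M⁻¹ * D)) + (X₀ + -(D * M⁻¹ * X₂)) + S := by abel
      _ = 0 := key
  refine ⟨heq, ?_⟩
  -- trace identities
  have e0 : (M⁻¹ * X₀ᵀ).trace = (M⁻¹ * X₀).trace := by
    conv_lhs => rw [← trace_transpose, transpose_mul, transpose_transpose, hMinvSym,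
      trace_mul_comm]
  have e1 : (M⁻¹ * (X₂ * M⁻¹ * D)).trace = (D * M⁻¹ * M⁻¹ * X₂).trace := by
    rw [trace_mul_comm M⁻¹, trace_mul_comm _ X₂]
    congr 1
    simp only [mul_assoc]
    rw [← mul_assoc M⁻¹ D M⁻¹, hcomm, mul_assoc]
  have e2 : (M⁻¹ * (D * M⁻¹ * X₂)).trace = (D * M⁻¹ * M⁻¹ * X₂).trace := by
    congr 1
    simp only [← mul_assoc]
    rw [hcomm]
  have tr : (M⁻¹ * X₀ᵀ).trace + (M⁻¹ * X₀).trace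
      = (M⁻¹ * (X₂ * M⁻¹ * D)).trace + (M⁻¹ * (D * M⁻¹ * X₂)).trace - (M⁻¹ * S).trace := by
    have h := congrArg (fun X => (M⁻¹ * X).trace) heq
    simpa [Matrix.mul_add, Matrix.mul_sub, trace_add, trace_sub] using h
  rw [trace_add]
  rw [e0] at tr
  rw [e1, e2] at tr
  linarith
end

section
/- Let the squared H₂ norm be ‖G‖₂² = Trace(BᵀPB) with B = [0; M⁻¹W^{1/2}], W = diag(wᵢ), wᵢ ≥ 0, and P the solution of the constrained Lyapunov equation above. Then ‖G‖₂² = Σᵢ wᵢ (X₂)ᵢᵢ / mᵢ², and it satisfies the two-sided bound (min wᵢ)/(2 max dᵢ) · (Trace(NL†) + Σᵢ sᵢ/mᵢ) ≤ ‖G‖₂² ≤ (max wᵢ)/(2 min dᵢ) · (Trace(NL†) + Σᵢ sᵢ/mᵢ). -/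
/-!
Both bounds follow from the trace formula and the trace identity once `(X₂)ᵢᵢ ≥ 0`, i.e. once
`P` is positive semidefinite. The state matrix `A` is only semistable, with kernel spanned by
`[𝟙; 0]`. Deflating it along the left null vector `u = [D𝟙; M𝟙]` gives `A - [𝟙; 0] uᵀ`, which is
Hurwitz because the roots of the quadratic pencil `L + λD + λ²M` other than `λ = 0` lie in the open
left half-plane; since `P [𝟙; 0] = 0`, `P` solves the same Lyapunov equation for the deflated
matrix. For a Hurwitz matrix the Cayley transform `F = (1 + A)(1 - A)⁻¹` has spectral radius `< 1`
and turns the Lyapunov equation into `P = FᵀPF + 2RᵀQR`, so `vᵀPv ≥ (Fᵏv)ᵀP(Fᵏv) → 0`.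
-/

open Matrix Filter Topology
open scoped ComplexOrder

namespace Complex

theorem eq_zero_or_re_neg_of_quadratic {a b c z : ℂ} (ha : 0 ≤ a) (hb : 0 < b) (hc : 0 < c)
    (hz : c * z ^ 2 + b * z + a = 0) : z = 0 ∨ z.re < 0 := by
  rw [nonneg_iff] at ha
  rw [pos_iff] at hb hc
  have hre := congrArg re hz
  have him := congrArg im hz
  simp only [sq, add_re, add_im, mul_re, mul_im, zero_re, zero_im, ← ha.2, ← hb.2, ← hc.2]
    at hre him
  by_cases hy : z.im = 0
  · rw [hy] at hre
    rcases lt_trichotomy z.re 0 with h | h | h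
    · exact Or.inr h
    · exact Or.inl (ext h hy)
    · nlinarith [mul_pos hc.1 (mul_pos h h), mul_pos hb.1 h]
  · right
    have : c.re * (2 * z.re) + b.re = 0 := mul_left_cancel₀ hy (by linarith)
    nlinarith

theorem norm_lt_one_of_mul_one_sub_eq {μ z : ℂ} (hz : z.re < 0) (h : μ * (1 - z) = 1 + z) :
    ‖μ‖ < 1 := by
  have hlt : ‖1 + z‖ < ‖1 - z‖ := by
    rw [← sq_lt_sq₀ (norm_nonneg _) (norm_nonneg _), Complex.sq_norm, Complex.sq_norm,
      normSq_apply, normSq_apply]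
    simp only [add_re, add_im, sub_re, sub_im, one_re, one_im]
    nlinarith
  rw [← h, norm_mul] at hlt
  nlinarith [norm_nonneg μ, norm_nonneg (1 - z)]

end Complex

theorem tendsto_pow_atTop_nhds_zero_of_spectralRadius_lt_one {A : Type*} [NormedRing A]
    [NormedAlgebra ℂ A] [CompleteSpace A] {a : A} (ha : spectralRadius ℂ a < 1) :
    Tendsto (a ^ ·) atTop (𝓝 0) := by
  obtain ⟨r, hr, hr1⟩ := ENNReal.lt_iff_exists_nnreal_btwn.mp ha
  have hbound : ∀ᶠ k : ℕ in atTop, ‖a ^ k‖ ≤ (r : ℝ) ^ k := by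
    have hgelfand := spectrum.pow_nnnorm_pow_one_div_tendsto_nhds_spectralRadius a
    filter_upwards [hgelfand.eventually_lt_const hr, eventually_ge_atTop 1] with k hk hk1
    rw [one_div, ENNReal.rpow_inv_lt_iff (by positivity), ENNReal.rpow_natCast] at hk
    exact_mod_cast hk.le
  exact squeeze_zero_norm' hbound
    (tendsto_pow_atTop_nhds_zero_of_lt_one r.coe_nonneg (by exact_mod_cast hr1))

theorem Finset.inf'_div_sup'_mul_sum_le {ι : Type*} {s : Finset ι} (hs : s.Nonempty)
    {w d t : ι → ℝ} (hw : ∀ i ∈ s, 0 ≤ w i) (hd : ∀ i ∈ s, 0 < d i) (ht : ∀ i ∈ s, 0 ≤ t i) :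
    s.inf' hs w / s.sup' hs d * ∑ i ∈ s, d i * t i ≤ ∑ i ∈ s, w i * t i := by
  rw [Finset.mul_sum]
  refine Finset.sum_le_sum fun i hi => ?_
  have hsup : 0 < s.sup' hs d := (hd i hi).trans_le (le_sup' d hi)
  calc s.inf' hs w / s.sup' hs d * (d i * t i) = s.inf' hs w * (d i / s.sup' hs d) * t i := by
        ring
    _ ≤ w i * 1 * t i :=
        mul_le_mul_of_nonneg_right (mul_le_mul (inf'_le w hi) ((div_le_one hsup).mpr
          (le_sup' d hi)) (div_nonneg (hd i hi).le hsup.le) (hw i hi)) (ht i hi)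
    _ = w i * t i := by ring

theorem Finset.sum_le_sup'_div_inf'_mul {ι : Type*} {s : Finset ι} (hs : s.Nonempty)
    {w d t : ι → ℝ} (hw : ∀ i ∈ s, 0 ≤ w i) (hd : ∀ i ∈ s, 0 < d i) (ht : ∀ i ∈ s, 0 ≤ t i) :
    ∑ i ∈ s, w i * t i ≤ s.sup' hs w / s.inf' hs d * ∑ i ∈ s, d i * t i := by
  rw [Finset.mul_sum]
  refine Finset.sum_le_sum fun i hi => ?_
  have hinf : 0 < s.inf' hs d := by
    obtain ⟨j, hj, hjd⟩ := exists_mem_eq_inf' hs d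
    exact hjd ▸ hd j hj
  have hsup : 0 ≤ s.sup' hs w := (hw i hi).trans (le_sup' w hi)
  calc w i * t i = w i * 1 * t i := by ring
    _ ≤ s.sup' hs w * (d i / s.inf' hs d) * t i :=
        mul_le_mul_of_nonneg_right (mul_le_mul (le_sup' w hi) ((one_le_div hinf).mpr
          (inf'_le d hi)) zero_le_one hsup) (ht i hi)
    _ = s.sup' hs w / s.inf' hs d * (d i * t i) := by ring

namespace Matrix

theorem exists_mulVec_eq_smul_of_mem_spectrum {ι K : Type*} [Fintype ι] [DecidableEq ι]
    [Field K] {A : Matrix ι ι K} {μ : K} (h : μ ∈ spectrum K A) : ∃ z ≠ 0, A *ᵥ z = μ • z := by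
  rw [← spectrum_toLin', ← Module.End.hasEigenvalue_iff_mem_spectrum] at h
  obtain ⟨z, hz, hz0⟩ := h.exists_hasEigenvector
  exact ⟨z, hz0, by simpa using Module.End.mem_eigenspace_iff.mp hz⟩

theorem IsHermitian.map_ofReal {ι : Type*} {L : Matrix ι ι ℝ} (hL : L.IsHermitian) :
    (L.map ((↑) : ℝ → ℂ)).IsHermitian :=
  hL.map _ fun r => (Complex.conj_ofReal r).symm

theorem PosSemidef.fromBlocks_zero {ι κ R : Type*} [Fintype ι] [Fintype κ] [CommRing R]
    [PartialOrder R] [StarRing R] [IsOrderedAddMonoid R] {A : Matrix ι ι R} {B : Matrix κ κ R}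
    (hA : A.PosSemidef) (hB : B.PosSemidef) : (fromBlocks A 0 0 B).PosSemidef := by
  refine .of_dotProduct_mulVec_nonneg (hA.isHermitian.fromBlocks (by simp) hB.isHermitian)
    fun x => ?_
  have hx : star x = Sum.elim (star (x ∘ Sum.inl)) (star (x ∘ Sum.inr)) :=
    (Sum.elim_comp_inl_inr _).symm
  rw [hx, fromBlocks_mulVec, sumElim_dotProduct_sumElim, zero_mulVec, zero_mulVec, add_zero,
    zero_add]
  exact add_nonneg (hA.dotProduct_mulVec_nonneg _) (hB.dotProduct_mulVec_nonneg _)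

theorem transpose_mul_fromBlocks_mul_of_toRows₁_eq_zero {ι κ R : Type*} [Fintype ι] [Fintype κ]
    [CommRing R] {B : Matrix (ι ⊕ ι) κ R} (hB : B.toRows₁ = 0) (A₁ A₂ A₃ A₄ : Matrix ι ι R) :
    Bᵀ * fromBlocks A₁ A₂ A₃ A₄ * B = B.toRows₂ᵀ * A₄ * B.toRows₂ := by
  rw [← fromRows_toRows B, hB, transpose_fromRows, fromCols_mul_fromBlocks, toRows₂_fromRows]
  simp only [transpose_zero, Matrix.zero_mul, zero_add]
  exact (fromCols_mul_fromRows _ _ _ _).trans (by simp)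

theorem eq_const_of_map_ofReal_mulVec_eq_zero {n : ℕ} {L L' : Matrix (Fin n) (Fin n) ℝ}
    (hL : L' * L = 1 - (n : ℝ)⁻¹ • of fun _ _ => 1) {x : Fin n → ℂ}
    (hx : L.map (↑) *ᵥ x = 0) : ∃ t : ℂ, x = fun _ => t := by
  have h : Complex.ofRealHom.mapMatrix (L' * L) *ᵥ x = 0 := by
    rw [map_mul, ← mulVec_mulVec]
    exact (congrArg _ hx).trans (mulVec_zero _)
  refine ⟨(n : ℂ)⁻¹ * ∑ j, x j, funext fun i => ?_⟩
  have := congrFun h i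
  rw [hL] at this
  simp only [mulVec, dotProduct, smul_of, RingHom.mapMatrix_apply, map_apply, sub_apply, one_apply,
    of_apply, Pi.smul_apply, smul_eq_mul, mul_one, Complex.ofRealHom_eq_coe, Complex.ofReal_sub,
    apply_ite Complex.ofReal, Complex.ofReal_one, Complex.ofReal_zero, Complex.ofReal_inv,
    Complex.ofReal_natCast, sub_mul, ite_mul, one_mul, zero_mul, Finset.sum_sub_distrib,
    Finset.sum_ite_eq, Finset.mem_univ, if_true, ← Finset.mul_sum, Pi.zero_apply] at this
  linear_combination this

theorem trace_diagonal_mul {ι R : Type*} [Fintype ι] [DecidableEq ι] [CommRing R]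
    (c : ι → R) (X : Matrix ι ι R) : (diagonal c * X).trace = ∑ i, c i * X i i := by
  simp only [trace, diag, diagonal_mul]

theorem trace_diagonal_mul_mul_diagonal {ι R : Type*} [Fintype ι] [DecidableEq ι] [CommRing R]
    (k : ι → R) (X : Matrix ι ι R) :
    (diagonal k * X * diagonal k).trace = ∑ i, k i ^ 2 * X i i := by
  rw [trace_mul_cycle, diagonal_mul_diagonal, trace_diagonal_mul]
  exact Finset.sum_congr rfl fun i _ => by ring

theorem inv_diagonal_of_ne_zero {ι K : Type*} [Fintype ι] [DecidableEq ι] [Field K] {v : ι → K}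
    (hv : ∀ i, v i ≠ 0) : (diagonal v)⁻¹ = diagonal fun i => (v i)⁻¹ := by
  refine inv_eq_left_inv ?_
  rw [diagonal_mul_diagonal, ← diagonal_one]
  exact congrArg diagonal (funext fun i => inv_mul_cancel₀ (hv i))

variable {ι : Type*} [Fintype ι]

theorem re_star_dotProduct_map_ofReal_mulVec (L : Matrix ι ι ℝ) (x : ι → ℂ) :
    (star x ⬝ᵥ L.map (↑) *ᵥ x).re = ((fun i => (x i).re) ⬝ᵥ L *ᵥ fun i => (x i).re)
      + ((fun i => (x i).im) ⬝ᵥ L *ᵥ fun i => (x i).im) := by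
  simp only [dotProduct, mulVec, Complex.re_sum, Pi.star_apply, Complex.star_def, Complex.mul_re,
    Complex.conj_re, Complex.conj_im, map_apply, Complex.ofReal_re, Complex.ofReal_im,
    Complex.im_ofReal_mul, Finset.mul_sum, ← Finset.sum_add_distrib]
  exact Finset.sum_congr rfl fun i _ => Finset.sum_congr rfl fun j _ => by ring

theorem PosSemidef.map_ofReal {L : Matrix ι ι ℝ} (hL : L.PosSemidef) :
    (L.map ((↑) : ℝ → ℂ)).PosSemidef := by
  have hH := hL.isHermitian.map_ofReal
  refine .of_dotProduct_mulVec_nonneg hH fun x => Complex.nonneg_iff.mpr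
    ⟨?_, (hH.im_star_dotProduct_mulVec_self x).symm⟩
  rw [re_star_dotProduct_map_ofReal_mulVec]
  exact add_nonneg (hL.dotProduct_mulVec_nonneg _) (hL.dotProduct_mulVec_nonneg _)

theorem PosDef.map_ofReal {L : Matrix ι ι ℝ} (hL : L.PosDef) :
    (L.map ((↑) : ℝ → ℂ)).PosDef := by
  have hH := hL.isHermitian.map_ofReal
  refine .of_dotProduct_mulVec_pos hH fun x hx => Complex.pos_iff.mpr
    ⟨?_, (hH.im_star_dotProduct_mulVec_self x).symm⟩
  rw [re_star_dotProduct_map_ofReal_mulVec]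
  by_cases hre : (fun i => (x i).re) = 0
  · have him : (fun i => (x i).im) ≠ 0 := fun him =>
      hx (funext fun i => Complex.ext (congrFun hre i) (congrFun him i))
    rw [hre]
    simpa using hL.dotProduct_mulVec_pos him
  · exact add_pos_of_pos_of_nonneg (by simpa using hL.dotProduct_mulVec_pos hre)
      (hL.posSemidef.dotProduct_mulVec_nonneg _)

theorem PosSemidef.eq_zero_or_re_neg_of_pencil {L D M : Matrix ι ι ℂ} (hL : L.PosSemidef)
    (hD : D.PosDef) (hM : M.PosDef) {μ : ℂ} {x : ι → ℂ} (hx : x ≠ 0)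
    (h : (L + μ • D + μ ^ 2 • M) *ᵥ x = 0) : μ = 0 ∨ μ.re < 0 := by
  have := congrArg (star x ⬝ᵥ ·) h
  simp only [add_mulVec, smul_mulVec, dotProduct_add, dotProduct_smul, smul_eq_mul,
    dotProduct_zero] at this
  exact Complex.eq_zero_or_re_neg_of_quadratic (hL.dotProduct_mulVec_nonneg x)
    (hD.dotProduct_mulVec_pos hx) (hM.dotProduct_mulVec_pos hx) (by linear_combination this)

theorem map_ofReal_mulVec (A : Matrix ι ι ℝ) (v : ι → ℝ) :
    A.map (↑) *ᵥ (fun i => (v i : ℂ)) = fun i => ((A *ᵥ v) i : ℂ) :=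
  funext fun i => (RingHom.map_mulVec Complex.ofRealHom A v i).symm

theorem ofReal_dotProduct_map_ofReal_mulVec (A : Matrix ι ι ℝ) (u : ι → ℝ) (z : ι → ℂ) :
    (fun i => (u i : ℂ)) ⬝ᵥ A.map (↑) *ᵥ z = (fun i => ((u ᵥ* A) i : ℂ)) ⬝ᵥ z := by
  rw [dotProduct_mulVec]
  congr 1
  exact funext fun j => (RingHom.map_vecMul Complex.ofRealHom A u j).symm

theorem dotProduct_transpose_mul_mul_mulVec (C W : Matrix ι ι ℝ) (v : ι → ℝ) :
    v ⬝ᵥ (Cᵀ * W * C) *ᵥ v = (C *ᵥ v) ⬝ᵥ W *ᵥ (C *ᵥ v) := by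
  rw [mul_assoc, ← mulVec_mulVec, ← mulVec_mulVec, dotProduct_mulVec, vecMul_transpose]

def IsHurwitz (A : Matrix ι ι ℝ) : Prop :=
  ∀ (μ : ℂ) (z : ι → ℂ), z ≠ 0 → A.map (↑) *ᵥ z = μ • z → μ.re < 0

theorem isHurwitz_sub_vecMulVec {A : Matrix ι ι ℝ} {u v : ι → ℝ} (huA : u ᵥ* A = 0)
    (huv : 0 < u ⬝ᵥ v)
    (hA : ∀ (μ : ℂ) (z : ι → ℂ), z ≠ 0 → A.map (↑) *ᵥ z = μ • z →
      μ.re < 0 ∨ ∃ t : ℂ, z = t • fun i => (v i : ℂ)) :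
    (A - vecMulVec v u).IsHurwitz := by
  intro μ z hz h
  set uc : ι → ℂ := fun i => (u i : ℂ)
  set vc : ι → ℂ := fun i => (v i : ℂ)
  have hc : uc ⬝ᵥ vc = ((u ⬝ᵥ v : ℝ) : ℂ) := by simp [uc, vc, dotProduct]
  have hmap : (A - vecMulVec v u).map (↑) = A.map (↑) - vecMulVec vc uc := by
    ext i j
    simp [vecMulVec_apply, uc, vc]
  have hAz : A.map (↑) *ᵥ z = μ • z + (uc ⬝ᵥ z) • vc := by
    rwa [hmap, sub_mulVec, vecMulVec_mulVec, op_smul_eq_smul, sub_eq_iff_eq_add] at h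
  have hu0 : uc ⬝ᵥ A.map (↑) *ᵥ z = 0 :=
    (ofReal_dotProduct_map_ofReal_mulVec A u z).trans (by simp [huA])
  -- `uᵀ (A - v uᵀ) = -(uᵀv) uᵀ`: either `μ = -uᵀv`, or `uᵀz = 0` and then `z` is an
  -- eigenvector of `A`
  have hdot : (uc ⬝ᵥ z) * (μ + ↑(u ⬝ᵥ v)) = 0 := by
    rw [hAz, dotProduct_add, dotProduct_smul, dotProduct_smul, hc, smul_eq_mul, smul_eq_mul] at hu0
    linear_combination hu0
  rcases mul_eq_zero.mp hdot with huz | hμ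
  · rw [huz, zero_smul, add_zero] at hAz
    refine (hA μ z hz hAz).resolve_right ?_
    rintro ⟨t, rfl⟩
    rw [dotProduct_smul, hc, smul_eq_mul, mul_eq_zero, Complex.ofReal_eq_zero] at huz
    exact hz (by rw [huz.resolve_right huv.ne', zero_smul])
  · have := congrArg Complex.re hμ
    simp only [Complex.add_re, Complex.ofReal_re, Complex.zero_re] at this
    linarith

variable [DecidableEq ι]

theorem tendsto_pow_atTop_nhds_zero_of_eigenvalues_norm_lt_one [Nonempty ι] {G : Matrix ι ι ℂ}
    (hG : ∀ (μ : ℂ) (z : ι → ℂ), z ≠ 0 → G *ᵥ z = μ • z → ‖μ‖ < 1) :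
    Tendsto (G ^ ·) atTop (𝓝 0) := by
  -- matrices carry no global norm; any submultiplicative one will do
  let _ := Matrix.linftyOpNormedRing (n := ι) (α := ℂ)
  let _ := Matrix.linftyOpNormedAlgebra (n := ι) (R := ℂ) (α := ℂ)
  refine tendsto_pow_atTop_nhds_zero_of_spectralRadius_lt_one ?_
  rw [← ENNReal.coe_one]
  refine spectrum.spectralRadius_lt_of_forall_lt G fun μ hμ => ?_
  obtain ⟨z, hz, hGz⟩ := exists_mulVec_eq_smul_of_mem_spectrum hμ
  exact_mod_cast hG μ z hz hGz

theorem tendsto_pow_atTop_nhds_zero_of_complex_eigenvalues_norm_lt_one [Nonempty ι]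
    {F : Matrix ι ι ℝ} (hF : ∀ (μ : ℂ) (z : ι → ℂ), z ≠ 0 → F.map (↑) *ᵥ z = μ • z → ‖μ‖ < 1) :
    Tendsto (F ^ ·) atTop (𝓝 0) := by
  have hre : (F ^ ·) = (fun X : Matrix ι ι ℂ => X.map Complex.re) ∘ (F.map (↑) ^ ·) := by
    ext k i j
    change _ = ((Complex.ofRealHom.mapMatrix F ^ k) i j).re
    rw [← map_pow, RingHom.mapMatrix_apply]
    simp
  have hcont : Continuous fun X : Matrix ι ι ℂ => X.map Complex.re :=
    continuous_id.matrix_map Complex.continuous_re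
  have h := (hcont.tendsto 0).comp (tendsto_pow_atTop_nhds_zero_of_eigenvalues_norm_lt_one hF)
  rwa [Matrix.map_zero _ Complex.zero_re, ← hre] at h

theorem IsHurwitz.isUnit_one_sub {A : Matrix ι ι ℝ} (hA : A.IsHurwitz) : IsUnit (1 - A) := by
  rw [isUnit_iff_isUnit_det, isUnit_iff_ne_zero]
  intro hdet
  obtain ⟨v, hv, hv0⟩ := exists_mulVec_eq_zero_iff.mpr hdet
  rw [sub_mulVec, one_mulVec, sub_eq_zero] at hv0
  have hvc : (fun i => (v i : ℂ)) ≠ 0 := fun h =>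
    hv (funext fun i => Complex.ofReal_eq_zero.mp (congrFun h i))
  have := hA 1 _ hvc (by rw [map_ofReal_mulVec, ← hv0, one_smul])
  norm_num at this

theorem IsHurwitz.norm_lt_one_of_cayley {A : Matrix ι ι ℝ} (hA : A.IsHurwitz) (μ : ℂ)
    (z : ι → ℂ) (hz : z ≠ 0) (h : ((1 + A) * (1 - A)⁻¹).map (↑) *ᵥ z = μ • z) : ‖μ‖ < 1 := by
  -- from `(1 - A) F = 1 + A`, `z` is an eigenvector of `A` for `ν = (μ - 1) / (μ + 1)`
  set Ac : Matrix ι ι ℂ := A.map (↑)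
  have hcayley : (1 - A) * ((1 + A) * (1 - A)⁻¹) = 1 + A := by
    rw [← mul_assoc, show (1 - A) * (1 + A) = (1 + A) * (1 - A) by noncomm_ring, mul_assoc,
      mul_nonsing_inv _ ((isUnit_iff_isUnit_det _).mp hA.isUnit_one_sub), mul_one]
  have hmap : (1 - Ac) * ((1 + A) * (1 - A)⁻¹).map (↑) = 1 + Ac := by
    have := congrArg Complex.ofRealHom.mapMatrix hcayley
    rwa [map_mul, map_sub, map_add, map_one] at this
  have hz' : ∀ i, μ * (z i - (Ac *ᵥ z) i) = z i + (Ac *ᵥ z) i := fun i => by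
    have := congrFun (congrArg (· *ᵥ z) hmap) i
    simpa [← mulVec_mulVec, h, sub_mulVec, add_mulVec, mulVec_smul] using this
  have hμ : μ + 1 ≠ 0 := fun hμ => hz <| funext fun i => by
    rw [Pi.zero_apply]
    linear_combination (-(1 : ℂ) / 2) * hz' i + ((z i - (Ac *ᵥ z) i) / 2) * hμ
  set ν := (μ - 1) / (μ + 1)
  have hAz : Ac *ᵥ z = ν • z := funext fun i => by
    simp only [Pi.smul_apply, smul_eq_mul, ν]
    field_simp
    linear_combination (-1 : ℂ) * hz' i
  refine Complex.norm_lt_one_of_mul_one_sub_eq (hA ν z hz hAz) ?_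
  simp only [ν]
  field_simp
  ring

theorem eq_cayley_stein_of_lyapunov {A P Q : Matrix ι ι ℝ} (hA : IsUnit (1 - A))
    (h : P * A + Aᵀ * P + Q = 0) :
    P = ((1 + A) * (1 - A)⁻¹)ᵀ * P * ((1 + A) * (1 - A)⁻¹)
      + 2 • ((1 - A)⁻¹ᵀ * Q * (1 - A)⁻¹) := by
  have hdet := (isUnit_iff_isUnit_det _).mp hA
  have hR : (1 - A)⁻¹ᵀ * (1 - A)ᵀ = 1 := by
    rw [← transpose_mul, mul_nonsing_inv _ hdet, transpose_one]
  have hQ : Q = -(P * A + Aᵀ * P) := (neg_eq_of_add_eq_zero_right h).symm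
  calc P = (1 - A)⁻¹ᵀ * ((1 - A)ᵀ * P * (1 - A)) * (1 - A)⁻¹ := by
        rw [← mul_assoc, ← mul_assoc, hR, one_mul, mul_assoc, mul_nonsing_inv _ hdet, mul_one]
    _ = _ := by
        rw [transpose_mul, transpose_add, transpose_sub, transpose_one, hQ]
        noncomm_ring

theorem IsHurwitz.posSemidef_of_lyapunov {A P Q : Matrix ι ι ℝ} (hA : A.IsHurwitz)
    (hP : P.IsHermitian) (hQ : Q.PosSemidef) (h : P * A + Aᵀ * P + Q = 0) : P.PosSemidef := by
  refine .of_dotProduct_mulVec_nonneg hP fun v => ?_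
  rcases isEmpty_or_nonempty ι with _ | _
  · simp [Subsingleton.elim v 0]
  have hstein := eq_cayley_stein_of_lyapunov hA.isUnit_one_sub h
  have hpow := tendsto_pow_atTop_nhds_zero_of_complex_eigenvalues_norm_lt_one
    hA.norm_lt_one_of_cayley
  set F := (1 + A) * (1 - A)⁻¹
  have hstep : ∀ u, (F *ᵥ u) ⬝ᵥ P *ᵥ (F *ᵥ u) ≤ u ⬝ᵥ P *ᵥ u := fun u => by
    conv_rhs => rw [hstein]
    rw [add_mulVec, dotProduct_add, dotProduct_transpose_mul_mul_mulVec, smul_mulVec,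
      dotProduct_smul, dotProduct_transpose_mul_mul_mulVec]
    have := hQ.dotProduct_mulVec_nonneg ((1 - A)⁻¹ *ᵥ u)
    simp only [star_trivial] at this
    linarith [smul_nonneg (zero_le_two (α := ℕ)) this]
  have hmono : ∀ k, (F ^ k *ᵥ v) ⬝ᵥ P *ᵥ (F ^ k *ᵥ v) ≤ v ⬝ᵥ P *ᵥ v := fun k => by
    induction k with
    | zero => simp
    | succ k ih =>
      rw [pow_succ', ← mulVec_mulVec]
      exact (hstep _).trans ih
  have hlim : Tendsto (fun k => (F ^ k *ᵥ v) ⬝ᵥ P *ᵥ (F ^ k *ᵥ v)) atTop (𝓝 0) := by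
    have hcont : Continuous fun X : Matrix ι ι ℝ => (X *ᵥ v) ⬝ᵥ P *ᵥ (X *ᵥ v) := by fun_prop
    simpa [Function.comp_def] using (hcont.tendsto 0).comp hpow
  simpa using le_of_tendsto' hlim hmono

/-- The state matrix of `M ẍ + D ẋ + L x = 0` in the state `(x, ẋ)`. -/
noncomputable def secondOrderCompanion (M D L : Matrix ι ι ℝ) : Matrix (ι ⊕ ι) (ι ⊕ ι) ℝ :=
  fromBlocks 0 1 (-(M⁻¹ * L)) (-(M⁻¹ * D))

theorem secondOrderCompanion_eigenvector {M D L : Matrix ι ι ℝ} (hM : IsUnit M) {μ : ℂ}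
    {z : ι ⊕ ι → ℂ} (h : (secondOrderCompanion M D L).map (↑) *ᵥ z = μ • z) :
    z ∘ Sum.inr = μ • z ∘ Sum.inl ∧
      (L.map (↑) + μ • D.map (↑) + μ ^ 2 • M.map (↑)) *ᵥ (z ∘ Sum.inl) = 0 := by
  have hz : z = Sum.elim (z ∘ Sum.inl) (z ∘ Sum.inr) := (Sum.elim_comp_inl_inr z).symm
  set x := z ∘ Sum.inl
  set y := z ∘ Sum.inr
  rw [hz, secondOrderCompanion, fromBlocks_map, fromBlocks_mulVec] at h
  have h₁ : y = μ • x := by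
    have : (0 : Matrix ι ι ℝ).map ((↑) : ℝ → ℂ) *ᵥ x + (1 : Matrix ι ι ℝ).map ((↑) : ℝ → ℂ) *ᵥ y
        = μ • x := congrArg (· ∘ Sum.inl) h
    simpa [Matrix.map_one] using this
  have h₂ : (-(M⁻¹ * L)).map (↑) *ᵥ x + (-(M⁻¹ * D)).map (↑) *ᵥ y = μ • y :=
    congrArg (· ∘ Sum.inr) h
  have hM' : ∀ X : Matrix ι ι ℝ, M.map (↑) * (-(M⁻¹ * X)).map (↑) = -X.map ((↑) : ℝ → ℂ) :=
    fun X => by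
      change Complex.ofRealHom.mapMatrix M * Complex.ofRealHom.mapMatrix (-(M⁻¹ * X)) =
        -Complex.ofRealHom.mapMatrix X
      rw [← map_mul, mul_neg,
        mul_nonsing_inv_cancel_left (A := M) X ((isUnit_iff_isUnit_det M).mp hM), map_neg]
  have h₂' := congrArg (M.map (↑) *ᵥ ·) h₂
  simp only [mulVec_add, mulVec_mulVec, hM', h₁, mulVec_smul, neg_mulVec] at h₂'
  refine ⟨h₁, ?_⟩
  rw [add_mulVec, add_mulVec, smul_mulVec, smul_mulVec]
  linear_combination (norm := module) -h₂'

theorem isHurwitz_secondOrderCompanion_sub_vecMulVec [Nonempty ι] {M D L : Matrix ι ι ℝ}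
    (hM : M.PosDef) (hD : D.PosDef) (hL : L.PosSemidef) (hL1 : L *ᵥ 1 = 0)
    (hker : ∀ x : ι → ℂ, L.map (↑) *ᵥ x = 0 → ∃ t : ℂ, x = fun _ => t) :
    (secondOrderCompanion M D L -
      vecMulVec (Sum.elim 1 0) (Sum.elim (1 ᵥ* D) (1 ᵥ* M))).IsHurwitz := by
  refine isHurwitz_sub_vecMulVec ?_ ?_ fun μ z hz h => ?_
  · have hLT : Lᵀ = L := (conjTranspose_eq_transpose_of_trivial L).symm.trans hL.isHermitian
    have hMM : ∀ X : Matrix ι ι ℝ, 1 ᵥ* M ᵥ* -(M⁻¹ * X) = -(1 ᵥ* X) := fun X => by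
      rw [vecMul_neg, vecMul_vecMul,
        mul_nonsing_inv_cancel_left (A := M) _ ((isUnit_iff_isUnit_det M).mp hM.isUnit)]
    have h1L : 1 ᵥ* L = 0 := by rw [← mulVec_transpose, hLT, hL1]
    rw [secondOrderCompanion, vecMul_fromBlocks, Sum.elim_comp_inl, Sum.elim_comp_inr, hMM, hMM,
      h1L]
    simp
  · rw [sumElim_dotProduct_sumElim, dotProduct_zero, add_zero, ← dotProduct_mulVec]
    simpa using hD.dotProduct_mulVec_pos one_ne_zero
  · obtain ⟨hy, hx⟩ := secondOrderCompanion_eigenvector hM.isUnit h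
    have hx0 : z ∘ Sum.inl ≠ 0 := fun hx0 => hz <| by
      rw [← Sum.elim_comp_inl_inr z, hy, hx0, smul_zero, Sum.elim_zero_zero]
    rcases hL.map_ofReal.eq_zero_or_re_neg_of_pencil hD.map_ofReal hM.map_ofReal hx0 hx with
      rfl | hre
    · right
      obtain ⟨t, ht⟩ := hker _ (by simpa using hx)
      refine ⟨t, funext fun i => ?_⟩
      rcases i with i | i
      · simpa using congrFun ht i
      · simpa using congrFun hy i
    · exact Or.inl hre

theorem posSemidef_of_lyapunov_secondOrderCompanion [Nonempty ι] {M D L : Matrix ι ι ℝ}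
    {P Q : Matrix (ι ⊕ ι) (ι ⊕ ι) ℝ} (hM : M.PosDef) (hD : D.PosDef) (hL : L.PosSemidef)
    (hL1 : L *ᵥ 1 = 0) (hker : ∀ x : ι → ℂ, L.map (↑) *ᵥ x = 0 → ∃ t : ℂ, x = fun _ => t)
    (hP : P.IsHermitian) (hQ : Q.PosSemidef) (hP1 : P *ᵥ Sum.elim (1 : ι → ℝ) 0 = 0)
    (h : P * secondOrderCompanion M D L + (secondOrderCompanion M D L)ᵀ * P + Q = 0) :
    P.PosSemidef := by
  refine (isHurwitz_secondOrderCompanion_sub_vecMulVec hM hD hL hL1 hker).posSemidef_of_lyapunov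
    hP hQ ?_
  have hP1' : Sum.elim 1 0 ᵥ* P = 0 := by
    rw [← mulVec_transpose, (conjTranspose_eq_transpose_of_trivial P).symm.trans hP, hP1]
  rw [← h, transpose_sub, transpose_vecMulVec, mul_sub, sub_mul, mul_vecMulVec, vecMulVec_mul,
    hP1, hP1', zero_vecMulVec, vecMulVec_zero]
  abel

end Matrix

theorem h2_norm_performance_bounds_general
    (n : ℕ) (hn : 0 < n) (m d s w : Fin n → ℝ)
    (hm : ∀ i, 0 < m i) (hd : ∀ i, 0 < d i) (hs : ∀ i, 0 < s i) (hw : ∀ i, 0 ≤ w i)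
    (M D S : Matrix (Fin n) (Fin n) ℝ)
    (hM : M = diagonal m) (hD : D = diagonal d) (hS : S = diagonal s)
    (L Ldag N : Matrix (Fin n) (Fin n) ℝ)
    (hLpsd : L.PosSemidef) (hL1 : L.mulVec (fun _ => 1) = 0)
    (hLdag₂ : Ldag * L = 1 - (n : ℝ)⁻¹ • Matrix.of (fun _ _ => (1 : ℝ)))
    (hNpsd : N.PosSemidef)
    (A : Matrix (Fin n ⊕ Fin n) (Fin n ⊕ Fin n) ℝ)
    (hA : A = fromBlocks 0 1 (-(M⁻¹ * L)) (-(M⁻¹ * D)))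
    (B : Matrix (Fin n ⊕ Fin n) (Fin n) ℝ)
    (hB : B = Matrix.of (Sum.elim (0 : Matrix (Fin n) (Fin n) ℝ)
      (M⁻¹ * diagonal fun i => Real.sqrt (w i))))
    (X₁ X₀ X₂ : Matrix (Fin n) (Fin n) ℝ)
    (P : Matrix (Fin n ⊕ Fin n) (Fin n ⊕ Fin n) ℝ)
    (hP : P = fromBlocks X₁ X₀ X₀ᵀ X₂) (hPsym : Pᵀ = P)
    (hLyap : P * A + Aᵀ * P + fromBlocks N 0 0 S = 0)
    (hPv₀ : P.mulVec (Sum.elim (fun _ => 1) 0) = 0)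
    -- the trace identity from Theorem 1's proof may be used:
    (hprev : (D * M⁻¹ * M⁻¹ * X₂).trace = (1 / 2) * (M⁻¹ * S + N * Ldag).trace) :
    (Bᵀ * P * B).trace = ∑ i, w i * X₂ i i / (m i) ^ 2 ∧
    (Finset.univ.inf' (Finset.univ_nonempty_iff.mpr (Fin.pos_iff_nonempty.mp hn)) w) /
        (2 * Finset.univ.sup' (Finset.univ_nonempty_iff.mpr (Fin.pos_iff_nonempty.mp hn)) d) *
        ((N * Ldag).trace + ∑ i, s i / m i) ≤ (Bᵀ * P * B).trace ∧
    (Bᵀ * P * B).trace ≤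
      (Finset.univ.sup' (Finset.univ_nonempty_iff.mpr (Fin.pos_iff_nonempty.mp hn)) w) /
        (2 * Finset.univ.inf' (Finset.univ_nonempty_iff.mpr (Fin.pos_iff_nonempty.mp hn)) d) *
        ((N * Ldag).trace + ∑ i, s i / m i) := by
  have : Nonempty (Fin n) := Fin.pos_iff_nonempty.mp hn
  have hMinv : M⁻¹ = diagonal fun i => (m i)⁻¹ := hM ▸ inv_diagonal_of_ne_zero fun i => (hm i).ne'
  have hPpsd : P.PosSemidef :=
    posSemidef_of_lyapunov_secondOrderCompanion (hM ▸ .diagonal hm) (hD ▸ .diagonal hd)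
      hLpsd hL1 (fun x hx => eq_const_of_map_ofReal_mulVec_eq_zero hLdag₂ hx)
      ((conjTranspose_eq_transpose_of_trivial P).trans hPsym)
      (hNpsd.fromBlocks_zero (hS ▸ .diagonal fun i => (hs i).le)) hPv₀ (hA ▸ hLyap)
  set t : Fin n → ℝ := fun i => X₂ i i / m i ^ 2
  have ht : ∀ i ∈ Finset.univ, 0 ≤ t i := fun i _ =>
    div_nonneg (by simpa [hP] using hPpsd.diag_nonneg (i := Sum.inr i)) (sq_nonneg _)
  have htrace : (Bᵀ * P * B).trace = ∑ i, w i * t i := by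
    have hB₂ : B.toRows₂ = diagonal fun i => (m i)⁻¹ * Real.sqrt (w i) := by
      rw [hB, ← diagonal_mul_diagonal, ← hMinv]; rfl
    rw [hP, transpose_mul_fromBlocks_mul_of_toRows₁_eq_zero (by rw [hB]; rfl), hB₂,
      diagonal_transpose, trace_diagonal_mul_mul_diagonal]
    refine Finset.sum_congr rfl fun i _ => ?_
    rw [mul_pow, Real.sq_sqrt (hw i)]
    simp only [t]
    field_simp
  have hsum : (N * Ldag).trace + ∑ i, s i / m i = 2 * ∑ i, d i * t i := by
    rw [hD, hS, hMinv, diagonal_mul_diagonal, diagonal_mul_diagonal, trace_diagonal_mul,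
      trace_add, diagonal_mul_diagonal, trace_diagonal] at hprev
    have hdt : ∑ i, d i * (m i)⁻¹ * (m i)⁻¹ * X₂ i i = ∑ i, d i * t i :=
      Finset.sum_congr rfl fun i _ => by simp only [t]; field_simp
    have hsm : ∑ i, (m i)⁻¹ * s i = ∑ i, s i / m i :=
      Finset.sum_congr rfl fun i _ => inv_mul_eq_div _ _
    linarith
  have h2 : ∀ a b c : ℝ, a / (2 * b) * (2 * c) = a / b * c := fun _ _ _ => by ring
  refine ⟨htrace.trans (Finset.sum_congr rfl fun i _ => (mul_div_assoc _ _ _).symm), ?_, ?_⟩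
  · rw [htrace, hsum, h2]
    exact Finset.inf'_div_sup'_mul_sum_le _ (fun i _ => hw i) (fun i _ => hd i) ht
  · rw [htrace, hsum, h2]
    exact Finset.sum_le_sup'_div_inf'_mul _ (fun i _ => hw i) (fun i _ => hd i) ht

/-- `‖G‖₂² = Trace(BᵀPB) = Σᵢ wᵢ (X₂)ᵢᵢ / mᵢ²` and the two-sided bound
`(min wᵢ)/(2 max dᵢ)·(Trace(NL†) + Σᵢ sᵢ/mᵢ) ≤ ‖G‖₂² ≤ (max wᵢ)/(2 min dᵢ)·(Trace(NL†) + Σᵢ sᵢ/mᵢ)`. -/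
theorem h2_norm_performance_bounds
    (n : ℕ) (hn : 0 < n) (m d s w : Fin n → ℝ)
    (hm : ∀ i, 0 < m i) (hd : ∀ i, 0 < d i) (hs : ∀ i, 0 < s i) (hw : ∀ i, 0 ≤ w i)
    (M D S W : Matrix (Fin n) (Fin n) ℝ)
    (hM : M = diagonal m) (hD : D = diagonal d) (hS : S = diagonal s) (hW : W = diagonal w)
    (L Ldag N : Matrix (Fin n) (Fin n) ℝ)
    (hLsym : L.IsSymm) (hLpsd : L.PosSemidef) (hL1 : L.mulVec (fun _ => 1) = 0)
    (hLdag₁ : L * Ldag = 1 - (n : ℝ)⁻¹ • Matrix.of (fun _ _ => (1 : ℝ)))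
    (hLdag₂ : Ldag * L = 1 - (n : ℝ)⁻¹ • Matrix.of (fun _ _ => (1 : ℝ)))
    (hLdagsym : Ldag.IsSymm)
    (hNsym : N.IsSymm) (hNpsd : N.PosSemidef) (hN1 : N.mulVec (fun _ => 1) = 0)
    (A : Matrix (Fin n ⊕ Fin n) (Fin n ⊕ Fin n) ℝ)
    (hA : A = fromBlocks 0 1 (-(M⁻¹ * L)) (-(M⁻¹ * D)))
    (B : Matrix (Fin n ⊕ Fin n) (Fin n) ℝ)
    (hB : B = Matrix.of (Sum.elim (0 : Matrix (Fin n) (Fin n) ℝ)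
      (M⁻¹ * diagonal fun i => Real.sqrt (w i))))
    (X₁ X₀ X₂ : Matrix (Fin n) (Fin n) ℝ)
    (P : Matrix (Fin n ⊕ Fin n) (Fin n ⊕ Fin n) ℝ)
    (hP : P = fromBlocks X₁ X₀ X₀ᵀ X₂) (hPsym : Pᵀ = P)
    (hLyap : P * A + Aᵀ * P + fromBlocks N 0 0 S = 0)
    (hPv₀ : P.mulVec (Sum.elim (fun _ => 1) 0) = 0)
    -- the trace identity from Theorem 1's proof may be used:
    (hprev : (D * M⁻¹ * M⁻¹ * X₂).trace = (1 / 2) * (M⁻¹ * S + N * Ldag).trace) :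
    (Bᵀ * P * B).trace = ∑ i, w i * X₂ i i / (m i) ^ 2 ∧
    (Finset.univ.inf' (Finset.univ_nonempty_iff.mpr (Fin.pos_iff_nonempty.mp hn)) w) /
        (2 * Finset.univ.sup' (Finset.univ_nonempty_iff.mpr (Fin.pos_iff_nonempty.mp hn)) d) *
        ((N * Ldag).trace + ∑ i, s i / m i) ≤ (Bᵀ * P * B).trace ∧
    (Bᵀ * P * B).trace ≤
      (Finset.univ.sup' (Finset.univ_nonempty_iff.mpr (Fin.pos_iff_nonempty.mp hn)) w) /
        (2 * Finset.univ.inf' (Finset.univ_nonempty_iff.mpr (Fin.pos_iff_nonempty.mp hn)) d) *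
        ((N * Ldag).trace + ∑ i, s i / m i) :=
  h2_norm_performance_bounds_general n hn m d s w hm hd hs hw M D S hM hD hS L Ldag N hLpsd hL1
    hLdag₂ hNpsd A hA B hB X₁ X₀ X₂ P hP hPsym hLyap hPv₀ hprev
end
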